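/- The map F defined by F(η)(α) = code of the R_EF^α-equivalence class of A_η↾α (when cf(α) = μ, A_η↾α ⊨ T, and R_EF^α is an equivalence relation; 0 otherwise) is continuous from κ^κ to κ^κ: for every η and every α < κ there exists β < κ such that F is constant on the values below α on the basic open set [η↾β]. -/

import Mathlib

open Set Cardinal FirstOrder FirstOrder.Language

variable {L : Language}

/-- A set of pairs `g` is (the graph of) a partial isomorphism between the
structures `A` and `B`: it is functional, injective, and preserves all
relations in both directions. -/
def IsPartialIso (A B : L.Structure Ordinal.{0}) (g : Set (Ordinal.{0} × Ordinal.{0})) : Prop :=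
  (∀ p ∈ g, ∀ q ∈ g, p.1 = q.1 → p.2 = q.2) ∧
  (∀ p ∈ g, ∀ q ∈ g, p.2 = q.2 → p.1 = q.1) ∧
  ∀ (n : ℕ) (R : L.Relations n) (v : Fin n → Ordinal.{0} × Ordinal.{0}), (∀ i, v i ∈ g) →
    (A.RelMap R (fun i => (v i).1) ↔ B.RelMap R (fun i => (v i).2))

/-- The moves of player I up to round `n` (as a list). -/
def histMoves (β : ℕ → Ordinal.{0}) (n : ℕ) : List Ordinal.{0} := (List.range (n + 1)).map β

/-- Legality of I's move at round `n` in the (unrestricted) game `EF^κ_ω`: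
moves are ordinals `< κ` and the chosen sets `X_{β_n}` strictly increase. -/
def ILegalAt (κo : Ordinal.{0}) (X : Ordinal.{0} → Set Ordinal.{0}) (β : ℕ → Ordinal.{0}) (n : ℕ) : Prop :=
  β n < κo ∧ (n = 0 → (X (β 0)).Nonempty) ∧ ∀ m, n = m + 1 → X (β m) ⊂ X (β n)

/-- Legality of II's move at round `n` in the (unrestricted) game `EF^κ_ω`:
the chosen partial functions `f_{θ_n}` strictly increase and cover `X_{β_n}`. -/
def IILegalAt (κo : Ordinal.{0}) (X : Ordinal.{0} → Set Ordinal.{0})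
    (Fp : Ordinal.{0} → Set (Ordinal.{0} × Ordinal.{0})) (β θ : ℕ → Ordinal.{0}) (n : ℕ) : Prop :=
  θ n < κo ∧ X (β n) ⊆ Prod.fst '' Fp (θ n) ∧ X (β n) ⊆ Prod.snd '' Fp (θ n) ∧
    ∀ m, n = m + 1 → Fp (θ m) ⊂ Fp (θ n)

/-- `σ` is a winning strategy for player II in `EF^κ_ω(A,B)`. -/
def IsWinFull (A B : L.Structure Ordinal.{0}) (κo : Ordinal.{0}) (X : Ordinal.{0} → Set Ordinal.{0})
    (Fp : Ordinal.{0} → Set (Ordinal.{0} × Ordinal.{0})) (σ : List Ordinal.{0} → Ordinal.{0}) : Prop :=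
  ∀ β : ℕ → Ordinal.{0}, (∀ n, ILegalAt κo X β n) →
    (∀ n, IILegalAt κo X Fp β (fun k => σ (histMoves β k)) n) ∧
    IsPartialIso A B (⋃ n, Fp (σ (histMoves β n)))

/-- Legality of I's move at round `n` in the restricted game
`EF^κ_ω(A↾α, B↾α)` : everything lives below `α`. -/
def ILegalResAt (α : Ordinal.{0}) (X : Ordinal.{0} → Set Ordinal.{0}) (β : ℕ → Ordinal.{0}) (n : ℕ) : Prop :=
  β n < α ∧ X (β n) ⊆ Set.Iio α ∧ ∀ m, n = m + 1 → X (β m) ⊆ X (β n)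

/-- Legality of II's move at round `n` in the restricted game. -/
def IILegalResAt (α : Ordinal.{0}) (X : Ordinal.{0} → Set Ordinal.{0})
    (Fp : Ordinal.{0} → Set (Ordinal.{0} × Ordinal.{0})) (β θ : ℕ → Ordinal.{0}) (n : ℕ) : Prop :=
  θ n < α ∧ Fp (θ n) ⊆ (Set.Iio α) ×ˢ (Set.Iio α) ∧
    X (β n) ⊆ Prod.fst '' Fp (θ n) ∧ X (β n) ⊆ Prod.snd '' Fp (θ n) ∧
    ∀ m, n = m + 1 → Fp (θ m) ⊆ Fp (θ n)

/-- `σ` is a winning strategy for player II in the restricted game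
`EF^κ_ω(A↾α, B↾α)`. -/
def IsWinRes (A B : L.Structure Ordinal.{0}) (α : Ordinal.{0}) (X : Ordinal.{0} → Set Ordinal.{0})
    (Fp : Ordinal.{0} → Set (Ordinal.{0} × Ordinal.{0})) (σ : List Ordinal.{0} → Ordinal.{0}) : Prop :=
  ∀ β : ℕ → Ordinal.{0}, (∀ n, ILegalResAt α X β n) →
    (∀ n, IILegalResAt α X Fp β (fun k => σ (histMoves β k)) n) ∧
    IsPartialIso A B (⋃ n, Fp (σ (histMoves β n)))

/-- `C ⊆ κ` is club in `κ`. -/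
def IsClubIn (κ : Cardinal.{0}) (C : Set Ordinal.{0}) : Prop :=
  C ⊆ Set.Iio κ.ord ∧
  (∀ β < κ.ord, ∃ α ∈ C, β < α) ∧
  ∀ B ⊆ C, B.Nonempty → sSup B < κ.ord → sSup B ∈ C

/-- The enumerations `(X_γ)_{γ<κ}` of `P_κ(κ)` and `(f_γ)_{γ<κ}` of all partial
functions with small domain and range are adequate. -/
def GoodEnum (κ : Cardinal.{0}) (X : Ordinal.{0} → Set Ordinal.{0})
    (Fp : Ordinal.{0} → Set (Ordinal.{0} × Ordinal.{0})) : Prop :=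
  (∀ γ < κ.ord, X γ ⊆ Set.Iio κ.ord ∧ #(X γ) < Cardinal.lift.{1} κ) ∧
  (∀ s : Set Ordinal.{0}, s ⊆ Set.Iio κ.ord → #s < Cardinal.lift.{1} κ →
    ∃ γ < κ.ord, X γ = s) ∧
  (∀ γ < κ.ord, Fp γ ⊆ (Set.Iio κ.ord) ×ˢ (Set.Iio κ.ord) ∧ #(Fp γ) < Cardinal.lift.{1} κ ∧
    ∀ p ∈ Fp γ, ∀ q ∈ Fp γ, p.1 = q.1 → p.2 = q.2) ∧
  (∀ g : Set (Ordinal.{0} × Ordinal.{0}), g ⊆ (Set.Iio κ.ord) ×ˢ (Set.Iio κ.ord) →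
    #g < Cardinal.lift.{1} κ → (∀ p ∈ g, ∀ q ∈ g, p.1 = q.1 → p.2 = q.2) →
    ∃ γ < κ.ord, Fp γ = g)
/-- The countable relational vocabulary `{P_m : m < ω}`, where `P_m` has arity
`ar m`. -/
def Lang (ar : ℕ → ℕ) : Language :=
  { Functions := fun _ => Empty
    Relations := fun n => { m : ℕ // ar m = n } }

/-- The structure `A_η` with domain `κ` coded by `η ∈ κ^κ` via a fixed pairing
bijection `π : κ^{<ω} → κ` (Definition 2.1): a tuple `v` satisfies `P_m` iff
`η (π (m, v)) > 0`. -/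
def codedStruct (ar : ℕ → ℕ) (π : ℕ × List Ordinal.{0} → Ordinal.{0}) (η : Ordinal.{0} → Ordinal.{0}) :
    (Lang ar).Structure Ordinal.{0} where
  funMap := fun f _ => f.elim
  RelMap := fun {n} R v => 0 < η (π (R.1, List.ofFn v))

/-- The restriction `S↾α` of a relational structure with domain the ordinals to
the ordinals below `α`. -/
def restrictStruct {ar : ℕ → ℕ} (S : (Lang ar).Structure Ordinal.{0}) (α : Ordinal.{0}) :
    (Lang ar).Structure ↥(Set.Iio α) where
  funMap := fun f _ => f.elim
  RelMap := fun {n} R v => S.RelMap R (fun i => (v i : Ordinal.{0}))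

/-- `A_η↾α ⊨ T`. -/
def ModelsRes (ar : ℕ → ℕ) (π : ℕ × List Ordinal.{0} → Ordinal.{0}) (T : (Lang ar).Theory)
    (η : Ordinal.{0} → Ordinal.{0}) (α : Ordinal.{0}) : Prop :=
  @Theory.Model (Lang ar) ↥(Set.Iio α) (restrictStruct (codedStruct ar π η) α) T

/-- The relation `R_EF^α` on `κ^κ`. -/
def REF (ar : ℕ → ℕ) (π : ℕ × List Ordinal.{0} → Ordinal.{0}) (T : (Lang ar).Theory)
    (X : Ordinal.{0} → Set Ordinal.{0}) (Fp : Ordinal.{0} → Set (Ordinal.{0} × Ordinal.{0}))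
    (α : Ordinal.{0}) (η ξ : Ordinal.{0} → Ordinal.{0}) : Prop :=
  (¬ ModelsRes ar π T η α ∧ ¬ ModelsRes ar π T ξ α) ∨
  (ModelsRes ar π T η α ∧ ModelsRes ar π T ξ α ∧
    ∃ σ, IsWinRes (codedStruct ar π η) (codedStruct ar π ξ) α X Fp σ)

open scoped Classical in
/-- The reduction map `F` of Theorem 2.8: `F(η)(α)` is a code of the
`R_EF^α`-equivalence class of `A_η↾α` when `cf(α) = μ`, `A_η↾α ⊨ T`, and
`R_EF^α` is an equivalence relation, and `0` otherwise. -/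
noncomputable def Fcode (μ : Cardinal) (ar : ℕ → ℕ) (π : ℕ × List Ordinal.{0} → Ordinal.{0})
    (T : (Lang ar).Theory) (X : Ordinal.{0} → Set Ordinal.{0})
    (Fp : Ordinal.{0} → Set (Ordinal.{0} × Ordinal.{0}))
    (code : Ordinal.{0} → (Ordinal.{0} → Ordinal.{0}) → Ordinal.{0})
    (η : Ordinal.{0} → Ordinal.{0}) : Ordinal.{0} → Ordinal.{0} := fun α =>
  if Ordinal.cof α = μ ∧ ModelsRes ar π T η α ∧ Equivalence (REF ar π T X Fp α) then
    code α η
  else 0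

/-! Since `κ` is regular and uncountable, the codes `π (m, l)` of the fewer than `κ` pairs with
`l` a list of ordinals below `α < κ` are bounded by some `β < κ`. Hence `η↾β` determines the
structure `A_η↾α`, so two functions agreeing below `β` give the same restricted structures
`A_η↾γ` for `γ < α`, the same models of `T`, and `R_EF^γ`-related codes (a winning strategy of
II in the game between `A_η↾γ` and itself also wins between `A_ξ↾γ` and `A_η↾γ`). -/

instance (ar : ℕ → ℕ) : (Lang ar).IsRelational := fun _ => inferInstanceAs (IsEmpty Empty)

theorem FirstOrder.Language.Structure.ext_of_relMap [L.IsRelational] {D : Type*}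
    (S T : L.Structure D)
    (h : ∀ (n : ℕ) (R : L.Relations n) (v : Fin n → D), S.RelMap R v ↔ T.RelMap R v) :
    S = T := by
  obtain ⟨f, r⟩ := S
  obtain ⟨f', r'⟩ := T
  congr
  · funext n F
    exact isEmptyElim F
  · funext n R v
    exact propext (h n R v)

theorem IsWinRes.congr_left {A A' B : L.Structure Ordinal.{0}} {α : Ordinal.{0}}
    {X : Ordinal.{0} → Set Ordinal.{0}} {Fp : Ordinal.{0} → Set (Ordinal.{0} × Ordinal.{0})}
    {σ : List Ordinal.{0} → Ordinal.{0}}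
    (hA : ∀ (n : ℕ) (R : L.Relations n) (v : Fin n → Ordinal.{0}), (∀ i, v i < α) →
      (A'.RelMap R v ↔ A.RelMap R v))
    (hσ : IsWinRes A B α X Fp σ) : IsWinRes A' B α X Fp σ := by
  intro β hβ
  obtain ⟨hII, hfun, hinj, hrel⟩ := hσ β hβ
  refine ⟨hII, hfun, hinj, fun n R v hv => (hA n R _ fun i => ?_).trans (hrel n R v hv)⟩
  obtain ⟨k, hk⟩ := Set.mem_iUnion.mp (hv i)
  exact ((hII k).2.1 hk).1

theorem exists_lt_ord_forall_code_lt {κ : Cardinal.{0}} (hκ : κ.IsRegular) (hκω : ℵ₀ < κ)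
    {π : ℕ × List Ordinal.{0} → Ordinal.{0}}
    (hπlt : ∀ (m : ℕ) (l : List Ordinal.{0}), (∀ x ∈ l, x < κ.ord) → π (m, l) < κ.ord)
    {α : Ordinal.{0}} (hα : α < κ.ord) :
    ∃ β < κ.ord, ∀ (m : ℕ) (l : List Ordinal.{0}), (∀ x ∈ l, x < α) → π (m, l) < β := by
  let codes : ℕ × List α.ToType → Ordinal.{0} := fun i =>
    π (i.1, i.2.map fun t => (Ordinal.ToType.mk.symm t : Ordinal.{0}))
  have hcard : #(ℕ × List α.ToType) < κ := by
    have hlist : #(List α.ToType) < κ :=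
      (mk_list_le_max _).trans_lt (max_lt hκω (by rwa [mk_toType, ← lt_ord]))
    simpa using mul_lt_of_lt hκ.aleph0_le hκω hlist
  have hcodes : ∀ i, codes i < κ.ord := fun i =>
    hπlt _ _ fun x hx => by
      obtain ⟨t, -, rfl⟩ := List.mem_map.mp hx
      exact lt_trans (Ordinal.ToType.mk.symm t).2 hα
  refine ⟨⨆ i, codes i + 1,
    Ordinal.iSup_add_one_lt_of_lt_cof (by rwa [hκ.cof_ord]) hcodes, fun m l hl => ?_⟩
  lift l to List (Set.Iio α) using hl
  calc π (m, l.map (↑)) = codes (m, l.map Ordinal.ToType.mk) := by simp [codes, Function.comp_def]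
    _ < codes (m, l.map Ordinal.ToType.mk) + 1 := Order.lt_add_one_iff.mpr le_rfl
    _ ≤ ⨆ i, codes i + 1 := le_ciSup Ordinal.bddAbove_of_small (m, l.map Ordinal.ToType.mk)

def CodesAgreeBelow (π : ℕ × List Ordinal.{0} → Ordinal.{0}) (α : Ordinal.{0})
    (η ξ : Ordinal.{0} → Ordinal.{0}) : Prop :=
  ∀ (m : ℕ) (l : List Ordinal.{0}), (∀ x ∈ l, x < α) → ξ (π (m, l)) = η (π (m, l))

theorem CodesAgreeBelow.mono {π : ℕ × List Ordinal.{0} → Ordinal.{0}} {α γ : Ordinal.{0}}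
    {η ξ : Ordinal.{0} → Ordinal.{0}} (h : CodesAgreeBelow π α η ξ) (hγ : γ ≤ α) :
    CodesAgreeBelow π γ η ξ :=
  fun m l hl => h m l fun x hx => (hl x hx).trans_le hγ

section CodedStructures

variable {ar : ℕ → ℕ} {π : ℕ × List Ordinal.{0} → Ordinal.{0}} {α : Ordinal.{0}}
  {η ξ : Ordinal.{0} → Ordinal.{0}} {T : (Lang ar).Theory} {X : Ordinal.{0} → Set Ordinal.{0}}
  {Fp : Ordinal.{0} → Set (Ordinal.{0} × Ordinal.{0})}

theorem codedStruct_relMap_iff_of_agree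
    (hagree : CodesAgreeBelow π α η ξ)
    {n : ℕ} (R : (Lang ar).Relations n) (v : Fin n → Ordinal.{0}) (hv : ∀ i, v i < α) :
    (codedStruct ar π ξ).RelMap R v ↔ (codedStruct ar π η).RelMap R v := by
  change 0 < ξ _ ↔ 0 < η _
  rw [hagree _ _ fun x hx => ?_]
  obtain ⟨i, rfl⟩ := List.mem_ofFn.mp hx
  exact hv i

theorem modelsRes_iff_of_agree (T : (Lang ar).Theory) (hagree : CodesAgreeBelow π α η ξ) :
    ModelsRes ar π T ξ α ↔ ModelsRes ar π T η α := by
  have hres : restrictStruct (codedStruct ar π ξ) α = restrictStruct (codedStruct ar π η) α :=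
    Structure.ext_of_relMap _ _ fun _ R v =>
      codedStruct_relMap_iff_of_agree hagree R _ fun i => (v i).2
  rw [ModelsRes, ModelsRes, hres]

theorem REF_of_agree (hagree : CodesAgreeBelow π α η ξ)
    (hequiv : Equivalence (REF ar π T X Fp α)) (hη : ModelsRes ar π T η α) :
    REF ar π T X Fp α ξ η := by
  rcases hequiv.refl η with ⟨hnot, -⟩ | ⟨-, -, σ, hσ⟩
  · exact absurd hη hnot
  exact Or.inr ⟨(modelsRes_iff_of_agree T hagree).mpr hη, hη, σ,
    hσ.congr_left fun _ R v hv => codedStruct_relMap_iff_of_agree hagree R v hv⟩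

theorem Fcode_eq_of_agree {μ : Cardinal}
    {code : Ordinal.{0} → (Ordinal.{0} → Ordinal.{0}) → Ordinal.{0}}
    (hcode : ∀ η ξ, REF ar π T X Fp α η ξ → code α η = code α ξ)
    (hagree : CodesAgreeBelow π α η ξ) :
    Fcode μ ar π T X Fp code ξ α = Fcode μ ar π T X Fp code η α := by
  have hmodels := modelsRes_iff_of_agree T hagree
  by_cases hcond : Ordinal.cof α = μ ∧ ModelsRes ar π T η α ∧ Equivalence (REF ar π T X Fp α)
  · obtain ⟨hcof, hη, hequiv⟩ := hcond
    rw [Fcode, Fcode, if_pos ⟨hcof, hmodels.mpr hη, hequiv⟩, if_pos ⟨hcof, hη, hequiv⟩]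
    exact hcode ξ η (REF_of_agree hagree hequiv hη)
  · rw [Fcode, Fcode, if_neg (by rwa [hmodels]), if_neg hcond]

end CodedStructures

theorem Fcode_continuous_general (κ μ : Cardinal.{0}) (hκ : κ.IsRegular) (hκω : ℵ₀ < κ)
    (ar : ℕ → ℕ) (π : ℕ × List Ordinal.{0} → Ordinal.{0})
    (hπlt : ∀ (m : ℕ) (l : List Ordinal.{0}), (∀ x ∈ l, x < κ.ord) → π (m, l) < κ.ord)
    (T : (Lang ar).Theory)
    (X : Ordinal.{0} → Set Ordinal.{0}) (Fp : Ordinal.{0} → Set (Ordinal.{0} × Ordinal.{0}))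
    (code : Ordinal.{0} → (Ordinal.{0} → Ordinal.{0}) → Ordinal.{0})
    -- the code depends only on the `R_EF^α`-equivalence class:
    (hcode : ∀ (α : Ordinal.{0}) (η ξ : Ordinal.{0} → Ordinal.{0}),
      REF ar π T X Fp α η ξ → code α η = code α ξ) :
    ∀ η : Ordinal.{0} → Ordinal.{0}, ∀ α < κ.ord, ∃ β < κ.ord,
      ∀ ξ : Ordinal.{0} → Ordinal.{0}, (∀ γ < β, ξ γ = η γ) →
        ∀ γ < α, Fcode μ ar π T X Fp code ξ γ = Fcode μ ar π T X Fp code η γ := by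
  intro η α hα
  obtain ⟨β, hβκ, hβ⟩ := exists_lt_ord_forall_code_lt hκ hκω hπlt hα
  have hagree : ∀ ξ : Ordinal.{0} → Ordinal.{0}, (∀ γ < β, ξ γ = η γ) →
      CodesAgreeBelow π α η ξ :=
    fun ξ hξ m l hl => hξ _ (hβ m l hl)
  exact ⟨β, hβκ, fun ξ hξ γ hγ => Fcode_eq_of_agree (hcode γ) ((hagree ξ hξ).mono hγ.le)⟩

/-- The map `F` of Theorem 2.8 is continuous: for every `η` and `α < κ` there
is `β < κ` such that the values of `F` below `α` are constant on the basic
open set `[η↾β]`. -/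
theorem Fcode_continuous (κ μ : Cardinal.{0}) (hκ : κ.IsRegular) (hκω : ℵ₀ < κ)
    (hμ : μ.IsRegular) (hμκ : μ < κ)
    (ar : ℕ → ℕ) (π : ℕ × List Ordinal.{0} → Ordinal.{0})
    (hπlt : ∀ (m : ℕ) (l : List Ordinal.{0}), (∀ x ∈ l, x < κ.ord) → π (m, l) < κ.ord)
    (hπinj : Function.Injective π)
    (T : (Lang ar).Theory)
    (X : Ordinal.{0} → Set Ordinal.{0}) (Fp : Ordinal.{0} → Set (Ordinal.{0} × Ordinal.{0}))
    (code : Ordinal.{0} → (Ordinal.{0} → Ordinal.{0}) → Ordinal.{0})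
    -- the code depends only on the `R_EF^α`-equivalence class:
    (hcode : ∀ (α : Ordinal.{0}) (η ξ : Ordinal.{0} → Ordinal.{0}),
      REF ar π T X Fp α η ξ → code α η = code α ξ) :
    ∀ η : Ordinal.{0} → Ordinal.{0}, ∀ α < κ.ord, ∃ β < κ.ord,
      ∀ ξ : Ordinal.{0} → Ordinal.{0}, (∀ γ < β, ξ γ = η γ) →
        ∀ γ < α, Fcode μ ar π T X Fp code ξ γ = Fcode μ ar π T X Fp code η γ :=
  Fcode_continuous_general κ μ hκ hκω ar π hπlt T X Fp code hcode
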